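/- Let d_∞(μ₁,μ₂) = limsup_n sup_{x_{1..n}} (1/n)|log(μ₁(x_{1..n})/μ₂(x_{1..n}))|. If a set C of probability measures on X^∞ is separable with respect to d_∞ with dense countable subset (μ_k), then the mixture ν = Σ_k w_k μ_k (positive weights summing to 1) satisfies: for every probability measure τ and every μ ∈ C, limsup (1/n)L_n(τ,ν) ≤ limsup (1/n)L_n(τ,μ). In particular the asymptotic regret of ν with respect to C is zero. -/

import Mathlib

open Real Filter
open scoped Topology

noncomputable section

def IsProcess {X : Type} [Fintype X] (μ : (n : ℕ) → (Fin n → X) → ℝ) : Prop :=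
  (∀ n w, 0 ≤ μ n w) ∧ (∀ n, ∑ w : Fin n → X, μ n w = 1) ∧
  (∀ n (w : Fin n → X), μ n w = ∑ a : X, μ (n + 1) (Fin.snoc w a))

def klTerm (a b : ℝ) : EReal :=
  if a = 0 then 0 else if b = 0 then (⊤ : EReal) else ((a * Real.log (a / b) : ℝ) : EReal)

/-- Cumulative KL loss `L_n(μ,ρ)` (extended-real valued, `0·log(0/0) := 0`). -/
def KLE {X : Type} [Fintype X] (μ ρ : (n : ℕ) → (Fin n → X) → ℝ) (n : ℕ) : EReal :=
  ∑ w : Fin n → X, klTerm (μ n w) (ρ n w)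

/-- `|log(a/b)|` with the conventions `log 0/0 := 0` and the value `∞` when exactly one
of `a`, `b` vanishes. -/
def dTerm (a b : ℝ) : EReal :=
  if a = 0 ∧ b = 0 then 0
  else if a = 0 ∨ b = 0 then (⊤ : EReal)
  else ((|Real.log (a / b)| : ℝ) : EReal)

/-- The distance `d_∞(μ₁,μ₂) = limsup_n sup_{x_{1..n}} (1/n)|log(μ₁(x_{1..n})/μ₂(x_{1..n}))|`. -/
def dInfty {X : Type} [Fintype X] (μ₁ μ₂ : (n : ℕ) → (Fin n → X) → ℝ) : EReal :=
  Filter.limsup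
    (fun n : ℕ => (((n : ℝ)⁻¹ : ℝ) : EReal) * ⨆ w : Fin n → X, dTerm (μ₁ n w) (μ₂ n w))
    atTop

/-!
Every component of the mixture is charged at most its prior weight: `ν ≥ w_k μ_k`, so
`L_n(τ,ν) ≤ L_n(τ,μ_k) - log w_k`, and trading `μ_k` for `μ` costs at most
`n · sup_x (1/n)|log(μ(x)/μ_k(x))|`, which is `n(d_∞(μ,μ_k) + o(1))`. Dividing by `n`, the
constant `-log w_k` disappears in the limit, so the regret against `μ` is at most
`d_∞(μ,μ_k)`, which density makes arbitrarily small.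
-/

open Finset

lemma EReal.coe_finset_sum {ι : Type*} (s : Finset ι) (f : ι → ℝ) :
    ((∑ i ∈ s, f i : ℝ) : EReal) = ∑ i ∈ s, (f i : EReal) :=
  map_sum (⟨⟨((↑) : ℝ → EReal), EReal.coe_zero⟩, EReal.coe_add⟩ : ℝ →+ EReal) f s

lemma limsup_le_limsup_of_forall_eventually_le_add {α : Type*} {f : Filter α} {u v : α → EReal}
    (h : ∀ ε : ℝ, 0 < ε → ∀ᶠ x in f, u x ≤ v x + ε) : limsup u f ≤ limsup v f := by
  refine EReal.le_of_forall_lt_iff_le.1 fun z hz => ?_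
  obtain ⟨z', hvz', hz'z⟩ := EReal.lt_iff_exists_real_btwn.1 hz
  have hpos : 0 < z - z' := sub_pos.2 (EReal.coe_lt_coe_iff.1 hz'z)
  refine limsup_le_of_le (by isBoundedDefault) ?_
  filter_upwards [h _ hpos, eventually_lt_of_limsup_lt hvz'] with x hux hvx
  calc u x ≤ v x + (z - z' : ℝ) := hux
    _ ≤ z' + (z - z' : ℝ) := add_le_add_left hvx.le _
    _ = z := by rw [← EReal.coe_add, add_sub_cancel]

lemma mul_le_tsum_mul {ι : Type*} {w f : ι → ℝ} (hw : ∀ j, 0 ≤ w j) (hsw : Summable w)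
    (hf₀ : ∀ j, 0 ≤ f j) (hf₁ : ∀ j, f j ≤ 1) (k : ι) : w k * f k ≤ ∑' j, w j * f j := by
  have hnonneg : ∀ j, 0 ≤ w j * f j := fun j => mul_nonneg (hw j) (hf₀ j)
  have hsum : Summable fun j => w j * f j :=
    hsw.of_nonneg_of_le hnonneg fun j => mul_le_of_le_one_right (hw j) (hf₁ j)
  exact hsum.le_tsum k fun j _ => hnonneg j

lemma IsProcess.le_one {X : Type} [Fintype X] {μ : (n : ℕ) → (Fin n → X) → ℝ}
    (hμ : IsProcess μ) (n : ℕ) (v : Fin n → X) : μ n v ≤ 1 :=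
  (single_le_sum (fun u _ => hμ.1 n u) (mem_univ v)).trans (hμ.2.1 n).le

lemma klTerm_le_add_of_dTerm_le {t m m' ν w d : ℝ} (ht : 0 ≤ t) (hm' : 0 ≤ m') (hw : 0 < w)
    (hdom : w * m' ≤ ν) (hd : dTerm m m' ≤ d) :
    klTerm t ν ≤ klTerm t m + ((t * (d - log w) : ℝ) : EReal) := by
  rcases ht.eq_or_lt with rfl | ht
  · simp [klTerm]
  by_cases hm : m = 0
  · simp only [klTerm, hm, ht.ne', if_true, if_false, EReal.top_add_coe, le_top]
  have hm'pos : 0 < m' := hm'.lt_of_ne fun h => by simp [dTerm, hm, ← h] at hd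
  have hν : 0 < ν := (mul_pos hw hm'pos).trans_le hdom
  have hd' : log m - log m' ≤ d := by
    have : |log (m / m')| ≤ d := by simpa [dTerm, hm, hm'pos.ne'] using hd
    exact (le_abs_self _).trans (log_div hm hm'pos.ne' ▸ this)
  have hlogν : log w + log m' ≤ log ν := by
    rw [← log_mul hw.ne' hm'pos.ne']
    exact log_le_log (mul_pos hw hm'pos) hdom
  have key : log (t / ν) ≤ log (t / m) + (d - log w) := by
    rw [log_div ht.ne' hν.ne', log_div ht.ne' hm]
    linarith
  simp only [klTerm, ht.ne', hν.ne', hm, if_false, ← EReal.coe_add, EReal.coe_le_coe_iff]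
  linarith [mul_le_mul_of_nonneg_left key ht.le]

lemma KLE_le_add_of_dTerm_le {X : Type} [Fintype X] {τ μ μ' ν : (n : ℕ) → (Fin n → X) → ℝ}
    {n : ℕ} {w d : ℝ} (hτ₀ : ∀ v, 0 ≤ τ n v) (hτ₁ : ∑ v, τ n v = 1) (hμ' : ∀ v, 0 ≤ μ' n v)
    (hw : 0 < w) (hdom : ∀ v, w * μ' n v ≤ ν n v) (hd : ∀ v, dTerm (μ n v) (μ' n v) ≤ d) :
    KLE τ ν n ≤ KLE τ μ n + ((d - log w : ℝ) : EReal) :=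
  calc KLE τ ν n
      ≤ ∑ v, (klTerm (τ n v) (μ n v) + ((τ n v * (d - log w) : ℝ) : EReal)) :=
        sum_le_sum fun v _ => klTerm_le_add_of_dTerm_le (hτ₀ v) (hμ' v) hw (hdom v) (hd v)
    _ = KLE τ μ n + ((d - log w : ℝ) : EReal) := by
        rw [sum_add_distrib, ← EReal.coe_finset_sum, ← sum_mul, hτ₁, one_mul, KLE]

lemma eventually_dTerm_le_of_dInfty_lt {X : Type} [Fintype X] {μ₁ μ₂ : (n : ℕ) → (Fin n → X) → ℝ}
    {r : ℝ} (h : dInfty μ₁ μ₂ < r) :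
    ∀ᶠ n : ℕ in atTop, ∀ v, dTerm (μ₁ n v) (μ₂ n v) ≤ ((n * r : ℝ) : EReal) := by
  filter_upwards [eventually_lt_of_limsup_lt h, eventually_gt_atTop 0] with n hn hpos v
  have hn' : (0 : ℝ) < n := Nat.cast_pos.2 hpos
  have hx := (mul_le_mul_of_nonneg_left (le_iSup (fun v => dTerm (μ₁ n v) (μ₂ n v)) v)
    (EReal.coe_nonneg.2 (inv_nonneg.2 hn'.le))).trans_lt hn
  generalize dTerm (μ₁ n v) (μ₂ n v) = x at hx ⊢
  induction x with
  | bot => exact bot_le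
  | top => simp [EReal.coe_mul_top_of_pos (inv_pos.2 hn')] at hx
  | coe y =>
    rw [← EReal.coe_mul, EReal.coe_lt_coe_iff, inv_mul_lt_iff₀ hn'] at hx
    exact EReal.coe_le_coe_iff.2 hx.le

/-- If `C` is separable w.r.t. `d_∞` with dense countable subset `(μ_k)`, then the mixture
`ν = Σ_k w_k μ_k` satisfies, for every measure `τ` and every `μ ∈ C`,
`limsup (1/n) L_n(τ,ν) ≤ limsup (1/n) L_n(τ,μ)`; in particular `ν` has vanishing
asymptotic regret with respect to `C`. -/
theorem dInfty_separable_mixture_regret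
    {X : Type} [Fintype X]
    (C : Set ((n : ℕ) → (Fin n → X) → ℝ)) (hC : ∀ μ ∈ C, IsProcess μ)
    (μ_ : ℕ → (n : ℕ) → (Fin n → X) → ℝ) (hμmem : ∀ k, μ_ k ∈ C)
    (hdense : ∀ μ ∈ C, ∀ ε : ℝ, 0 < ε → ∃ k, dInfty μ (μ_ k) ≤ (ε : EReal))
    (w : ℕ → ℝ) (hw : ∀ k, 0 < w k) (hws : ∑' k, w k = 1)
    (ν : (n : ℕ) → (Fin n → X) → ℝ)
    (hνmix : ∀ (n : ℕ) (v : Fin n → X), ν n v = ∑' k, w k * μ_ k n v) :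
    ∀ τ : (n : ℕ) → (Fin n → X) → ℝ, IsProcess τ →
      ∀ μ ∈ C,
        Filter.limsup (fun n : ℕ => (((n : ℝ)⁻¹ : ℝ) : EReal) * KLE τ ν n) atTop ≤
        Filter.limsup (fun n : ℕ => (((n : ℝ)⁻¹ : ℝ) : EReal) * KLE τ μ n) atTop := by
  intro τ hτ μ hμ
  have hsw : Summable w := by
    by_contra h
    simp [tsum_eq_zero_of_not_summable h] at hws
  have hdom : ∀ k n v, w k * μ_ k n v ≤ ν n v := fun k n v =>
    hνmix n v ▸ mul_le_tsum_mul (fun j => (hw j).le) hsw (fun j => (hC _ (hμmem j)).1 n v)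
      (fun j => (hC _ (hμmem j)).le_one n v) k
  refine limsup_le_limsup_of_forall_eventually_le_add fun ε hε => ?_
  obtain ⟨k, hk⟩ := hdense μ hμ (ε / 4) (by positivity)
  have hd : dInfty μ (μ_ k) < ((ε / 2 : ℝ) : EReal) :=
    hk.trans_lt (EReal.coe_lt_coe_iff.2 (by linarith))
  have hlog : ∀ᶠ n : ℕ in atTop, -log (w k) / n < ε / 2 :=
    (tendsto_const_div_atTop_nhds_zero_nat _).eventually (gt_mem_nhds (by positivity))
  filter_upwards [eventually_dTerm_le_of_dInfty_lt hd, hlog, eventually_gt_atTop 0]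
    with n hdn hlogn hn
  have hn' : (0 : ℝ) < n := Nat.cast_pos.2 hn
  calc (((n : ℝ)⁻¹ : ℝ) : EReal) * KLE τ ν n
      ≤ (((n : ℝ)⁻¹ : ℝ) : EReal) * (KLE τ μ n + ((n * (ε / 2) - log (w k) : ℝ) : EReal)) :=
        mul_le_mul_of_nonneg_left (KLE_le_add_of_dTerm_le (hτ.1 n) (hτ.2.1 n)
          ((hC _ (hμmem k)).1 n) (hw k) (hdom k n) hdn) (EReal.coe_nonneg.2 (by positivity))
    _ = (((n : ℝ)⁻¹ : ℝ) : EReal) * KLE τ μ n + ((ε / 2 + -log (w k) / n : ℝ) : EReal) := by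
        rw [EReal.left_distrib_of_nonneg_of_ne_top (EReal.coe_nonneg.2 (by positivity))
          (EReal.coe_ne_top _), ← EReal.coe_mul]
        congr 2
        field_simp
        ring
    _ ≤ (((n : ℝ)⁻¹ : ℝ) : EReal) * KLE τ μ n + ε :=
        add_le_add le_rfl (EReal.coe_le_coe_iff.2 (by linarith))
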